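/- Let X be a locally compact Hausdorff space and let T be a set of continuous functions h : X → [-∞,∞) such that: (i) T satisfies the tail condition for (μ_α^{t_α}); (ii) limsup_α μ_α(K)^{t_α} ≤ liminf_α μ_α(G)^{t_α} for every compact K ⊂ X and every open G ⊂ X with K ⊂ G; (iii) there is a real m with Λ̄(h) > m for all h ∈ T. If moreover (μ_α) is exponentially tight with respect to (t_α), then Λ(h) exists for every h ∈ T, and there are a real M and a compact set K ⊂ X such that Λ(h) = sup_{x ∈ K ∩ {m ≤ h ≤ M}} (h(x) − l_1(x)) = sup_{x ∈ X} (h(x) − l_1(x)) for all h ∈ T. -/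

import Mathlib

/-!
Lower bound: if `h > r` on an open `G ∋ x`, the integral of `e^{h/t}` dominates `e^{r/t} μ(G)`,
so `e^{h(x) - l₁(x)} ≤ liminf`.

Upper bound: on the scale of `t`-th powers a finite sum contributes only its largest term, since
`(u + v)^t ≤ 2^t max(u, v)^t` and `2^t → 1`. Split `X` into `{h > M}` (tail condition), `{h < m}`,
the complement of an exponentially tight compact `K`, and the compact `C = K ∩ {m ≤ h ≤ M}`.
Cover `C` by finitely many compact neighbourhoods `D` on which `h` stays below a level slightly
above its value at the centre, each inside an open `G` with small `liminf μ(G)^t`; hypothesis (ii)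
turns this into a bound on `limsup μ(D)^t`. The first three pieces contribute at most
`e^m < e^{Λ̄(h)}`, so the `limsup` is at most `sup_C e^{h - l₁}`, hence at most the `liminf`.
-/

open Filter MeasureTheory Topology Set
open scoped ENNReal NNReal

noncomputable section

variable {X : Type*} [TopologicalSpace X] [MeasurableSpace X]
variable {A : Type*} [Preorder A]

/-- `(∫ e^{h/t_α} dμ_α)^{t_α}` as an extended nonnegative real. -/
noncomputable def expPow (μ : A → Measure X) (t : A → ℝ) (h : X → EReal) (a : A) : ℝ≥0∞ :=
  (∫⁻ x, EReal.exp ((((t a)⁻¹ : ℝ) : EReal) * h x) ∂(μ a)) ^ (t a)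

/-- `Λ̄(h) = log limsup_α (∫ e^{h/t_α} dμ_α)^{t_α}`. -/
noncomputable def LambdaBar (μ : A → Measure X) (t : A → ℝ) (h : X → EReal) : EReal :=
  ENNReal.log (Filter.limsup (expPow μ t h) Filter.atTop)

/-- `Λ̲(h) = log liminf_α (∫ e^{h/t_α} dμ_α)^{t_α}`. -/
noncomputable def LambdaUnder (μ : A → Measure X) (t : A → ℝ) (h : X → EReal) : EReal :=
  ENNReal.log (Filter.liminf (expPow μ t h) Filter.atTop)

/-- `Λ(h)` exists when `Λ̲(h) = Λ̄(h)`. -/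
def LambdaExists (μ : A → Measure X) (t : A → ℝ) (h : X → EReal) : Prop :=
  LambdaUnder μ t h = LambdaBar μ t h

/-- `l₁(x) = −log inf { liminf_α μ_α(G)^{t_α} : G open, x ∈ G }`. -/
noncomputable def lOne (μ : A → Measure X) (t : A → ℝ) (x : X) : EReal :=
  - ENNReal.log (⨅ (G : Set X) (_ : IsOpen G) (_ : x ∈ G),
      Filter.liminf (fun a => μ a G ^ (t a)) Filter.atTop)

/-- `l₀(x) = −log inf { limsup_α μ_α(G)^{t_α} : G open, x ∈ G }`. -/
noncomputable def lZero (μ : A → Measure X) (t : A → ℝ) (x : X) : EReal :=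
  - ENNReal.log (⨅ (G : Set X) (_ : IsOpen G) (_ : x ∈ G),
      Filter.limsup (fun a => μ a G ^ (t a)) Filter.atTop)

/-- The uniform tail condition for a family `T`. -/
def TailCondition (μ : A → Measure X) (t : A → ℝ) (T : Set (X → EReal)) : Prop :=
  ∀ ε : ℝ, 0 < ε → ∃ M : ℝ, ∀ h ∈ T,
    Filter.limsup (fun a =>
        (∫⁻ x in {x | (M : EReal) < h x}, EReal.exp ((((t a)⁻¹ : ℝ) : EReal) * h x) ∂(μ a))
          ^ (t a)) Filter.atTop
      < ENNReal.ofReal ε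

/-- Vague large deviation principle with powers `t` and rate function `J`. -/
def VagueLDP (μ : A → Measure X) (t : A → ℝ) (J : X → ℝ≥0∞) : Prop :=
  LowerSemicontinuous J ∧
  (∀ K : Set X, IsCompact K →
      Filter.limsup (fun a => μ a K ^ (t a)) Filter.atTop ≤ ⨆ x ∈ K, EReal.exp (-(J x : EReal))) ∧
  (∀ G : Set X, IsOpen G →
      (⨆ x ∈ G, EReal.exp (-(J x : EReal))) ≤ Filter.liminf (fun a => μ a G ^ (t a)) Filter.atTop)

/-- Narrow large deviation principle with powers `t` and rate function `J`. -/
def NarrowLDP (μ : A → Measure X) (t : A → ℝ) (J : X → ℝ≥0∞) : Prop :=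
  LowerSemicontinuous J ∧
  (∀ F : Set X, IsClosed F →
      Filter.limsup (fun a => μ a F ^ (t a)) Filter.atTop ≤ ⨆ x ∈ F, EReal.exp (-(J x : EReal))) ∧
  (∀ G : Set X, IsOpen G →
      (⨆ x ∈ G, EReal.exp (-(J x : EReal))) ≤ Filter.liminf (fun a => μ a G ^ (t a)) Filter.atTop)

/-- Exponential tightness of `(μ_α)` with respect to `(t_α)`. -/
def ExpTight (μ : A → Measure X) (t : A → ℝ) : Prop :=
  ∀ ε : ℝ, 0 < ε → ∃ K : Set X, IsCompact K ∧
    Filter.limsup (fun a => μ a Kᶜ ^ (t a)) Filter.atTop < ENNReal.ofReal ε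

/-- The linear function `h_λ(x) = λ x`, as an `EReal`-valued function on `ℝ`. -/
noncomputable def hlin (l : ℝ) : ℝ → EReal := fun x => ((l * x : ℝ) : EReal)

/-- Legendre-Fenchel transform of `L` restricted to `G` (extended by `+∞` off `G`):
`L|_G^*(x) = sup_{λ ∈ G} (λ x − L λ)`. -/
noncomputable def LegG (L : ℝ → ℝ) (G : Set ℝ) (x : ℝ) : EReal :=
  ⨆ l ∈ G, ((l * x - L l : ℝ) : EReal)

/-- Abstract Legendre-Fenchel transform `Λ|_S^*(x) = sup_{h ∈ S} (h(x) − Λ(h))`. -/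
noncomputable def LamStar (μ : A → Measure X) (t : A → ℝ) (S : Set (X → EReal)) (x : X) : EReal :=
  ⨆ h ∈ S, (h x - LambdaBar μ t h)

/-- The union of the ranges of the left and right derivatives of `L` restricted to `G`. -/
def ranLR (L : ℝ → ℝ) (G : Set ℝ) : Set ℝ :=
  {d : ℝ | ∃ l ∈ G, HasDerivWithinAt L d (Set.Iio l) l ∨ HasDerivWithinAt L d (Set.Ioi l) l}


section ExpIntegral

variable {Ω ι : Type*} [MeasurableSpace Ω] {μ : ι → Measure Ω} {t : ι → ℝ} {h : Ω → EReal}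
  {S S' : Set Ω} {r : EReal} {a : ι}

def setExpPow (μ : ι → Measure Ω) (t : ι → ℝ) (h : Ω → EReal) (S : Set Ω) (a : ι) : ℝ≥0∞ :=
  (∫⁻ x in S, EReal.exp ((((t a)⁻¹ : ℝ) : EReal) * h x) ∂(μ a)) ^ (t a)

lemma rpow_inv_mul_rpow {s : ℝ} (hs : 0 < s) (c z : ℝ≥0∞) : (c ^ s⁻¹ * z) ^ s = c * z ^ s := by
  rw [ENNReal.mul_rpow_of_nonneg _ _ hs.le, ← ENNReal.rpow_mul, inv_mul_cancel₀ hs.ne',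
    ENNReal.rpow_one]

lemma setExpPow_le_of_le (ha : 0 < t a) (hS : ∀ x ∈ S, h x ≤ r) :
    setExpPow μ t h S a ≤ EReal.exp r * μ a S ^ t a := by
  rw [setExpPow, ← rpow_inv_mul_rpow ha, ← setLIntegral_const]
  refine ENNReal.rpow_le_rpow (setLIntegral_mono measurable_const fun x hx => ?_) ha.le
  rw [mul_comm, EReal.exp_mul]
  exact ENNReal.rpow_le_rpow (EReal.exp_monotone (hS x hx)) (inv_pos.2 ha).le

lemma le_setExpPow_of_le (ha : 0 < t a) (hSm : MeasurableSet S) (hS : ∀ x ∈ S, r ≤ h x) :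
    EReal.exp r * μ a S ^ t a ≤ setExpPow μ t h S a := by
  rw [setExpPow, ← rpow_inv_mul_rpow ha, ← setLIntegral_const]
  refine ENNReal.rpow_le_rpow (setLIntegral_mono' hSm fun x hx => ?_) ha.le
  rw [mul_comm, EReal.exp_mul]
  exact ENNReal.rpow_le_rpow (EReal.exp_monotone (hS x hx)) (inv_pos.2 ha).le

lemma setExpPow_mono (ha : 0 ≤ t a) (hSS' : S ⊆ S') :
    setExpPow μ t h S a ≤ setExpPow μ t h S' a :=
  ENNReal.rpow_le_rpow (lintegral_mono_set hSS') ha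

lemma setExpPow_univ : setExpPow μ t h univ = expPow μ t h := by
  ext a
  simp [setExpPow, expPow]

variable [Preorder ι]

lemma limsup_setExpPow_le_of_le (hpos : ∀ a, 0 < t a) (hr : r ≠ ⊤) (hS : ∀ x ∈ S, h x ≤ r) :
    limsup (setExpPow μ t h S) atTop ≤ EReal.exp r * limsup (fun a => μ a S ^ t a) atTop := by
  rw [← ENNReal.limsup_const_mul_of_ne_top (by simpa using hr)]
  exact limsup_le_limsup (.of_forall fun a => setExpPow_le_of_le (hpos a) hS)

variable [IsDirected ι (· ≤ ·)] [Nonempty ι]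

lemma limsup_add_rpow_le (hpos : ∀ a, 0 < t a) (hto0 : Tendsto t atTop (𝓝 0))
    (u v : ι → ℝ≥0∞) :
    limsup (fun a => (u a + v a) ^ t a) atTop ≤
      max (limsup (fun a => u a ^ t a) atTop) (limsup (fun a => v a ^ t a) atTop) := by
  have hle : ∀ a, (u a + v a) ^ t a ≤ 2 ^ t a * max (u a ^ t a) (v a ^ t a) := fun a => by
    rw [← (ENNReal.monotone_rpow_of_nonneg (hpos a).le).map_max,
      ← ENNReal.mul_rpow_of_nonneg _ _ (hpos a).le, two_mul]
    exact ENNReal.rpow_le_rpow (add_le_add (le_max_left _ _) (le_max_right _ _)) (hpos a).le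
  have htwo : limsup (fun a => (2 : ℝ≥0∞) ^ t a) atTop = 1 := by
    have hreal : Tendsto (fun a => (2 : ℝ) ^ t a) atTop (𝓝 1) := by
      simpa using tendsto_const_nhds.rpow hto0 (Or.inl two_ne_zero)
    refine Tendsto.limsup_eq ?_
    simpa [← ENNReal.ofReal_rpow_of_pos two_pos] using ENNReal.tendsto_ofReal hreal
  calc limsup (fun a => (u a + v a) ^ t a) atTop
      ≤ limsup ((fun a => (2 : ℝ≥0∞) ^ t a) * fun a => max (u a ^ t a) (v a ^ t a)) atTop :=
        limsup_le_limsup (.of_forall hle)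
    _ ≤ limsup (fun a => (2 : ℝ≥0∞) ^ t a) atTop *
          limsup (fun a => max (u a ^ t a) (v a ^ t a)) atTop :=
        ENNReal.limsup_mul_le' (by simp [htwo]) (by simp [htwo])
    _ = _ := by rw [htwo, one_mul, limsup_max]

lemma limsup_setExpPow_union_le (hpos : ∀ a, 0 < t a) (hto0 : Tendsto t atTop (𝓝 0)) :
    limsup (setExpPow μ t h (S ∪ S')) atTop ≤
      max (limsup (setExpPow μ t h S) atTop) (limsup (setExpPow μ t h S') atTop) :=
  (limsup_le_limsup (.of_forall fun a =>
    ENNReal.rpow_le_rpow (lintegral_union_le _ S S') (hpos a).le)).trans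
    (limsup_add_rpow_le hpos hto0 _ _)

lemma limsup_setExpPow_biUnion_le {κ : Type*} (hpos : ∀ a, 0 < t a)
    (hto0 : Tendsto t atTop (𝓝 0)) (s : Finset κ) (D : κ → Set Ω) :
    limsup (setExpPow μ t h (⋃ i ∈ s, D i)) atTop ≤
      s.sup fun i => limsup (setExpPow μ t h (D i)) atTop := by
  classical
  induction s using Finset.induction_on with
  | empty =>
    have hempty : setExpPow μ t h ∅ = 0 := funext fun a => by simp [setExpPow, hpos a]
    simp [hempty, Pi.zero_def]
  | insert i s _ ih =>
    rw [Finset.set_biUnion_insert, Finset.sup_insert]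
    exact (limsup_setExpPow_union_le hpos hto0).trans (max_le_max le_rfl ih)

end ExpIntegral

def expNegLOne (μ : A → Measure X) (t : A → ℝ) (x : X) : ℝ≥0∞ :=
  ⨅ (G : Set X) (_ : IsOpen G) (_ : x ∈ G), liminf (fun a => μ a G ^ t a) atTop

section LargeDeviations

variable {μ : A → Measure X} {t : A → ℝ} {h : X → EReal}

lemma log_exp_mul_expNegLOne (x : X) :
    ENNReal.log (EReal.exp (h x) * expNegLOne μ t x) = h x - lOne μ t x := by
  rw [ENNReal.log_mul_add, EReal.log_exp, lOne, sub_eq_add_neg, neg_neg, expNegLOne]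

lemma exists_mem_nhds_limsup_setExpPow_lt [LocallyCompactSpace X] (hpos : ∀ a, 0 < t a)
    (hKG : ∀ K G : Set X, IsCompact K → IsOpen G → K ⊆ G →
      limsup (fun a => μ a K ^ t a) atTop ≤ liminf (fun a => μ a G ^ t a) atTop)
    (hh : UpperSemicontinuous h) {x : X} (hx₀ : h x ≠ ⊥) (hx : h x ≠ ⊤) {c : ℝ≥0∞}
    (hc : EReal.exp (h x) * expNegLOne μ t x < c) :
    ∃ D ∈ 𝓝 x, limsup (setExpPow μ t h D) atTop < c := by
  -- choose `b > expNegLOne μ t x` and `e > exp (h x)` with `e * b < c`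
  have hexp₀ : EReal.exp (h x) ≠ 0 := by simpa using hx₀
  have hexp : EReal.exp (h x) ≠ ⊤ := by simpa using hx
  obtain ⟨b, hIb, hbc⟩ := exists_between <|
    (ENNReal.lt_div_iff_mul_lt (Or.inl hexp₀) (Or.inl hexp)).2 (by rwa [mul_comm])
  have hb0 : b ≠ 0 := (zero_le.trans_lt hIb).ne'
  obtain ⟨e, hxe, hec⟩ := exists_between <|
    (ENNReal.lt_div_iff_mul_lt (Or.inl hb0) (Or.inl hbc.ne_top)).2
      (by rw [mul_comm]; exact ENNReal.mul_lt_of_lt_div hbc)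
  have hxr : h x < ENNReal.log e := by rwa [← EReal.exp_lt_exp_iff, ENNReal.exp_log]
  obtain ⟨G, hxG, hGo, hGb⟩ :
      ∃ G, x ∈ G ∧ IsOpen G ∧ liminf (fun a => μ a G ^ t a) atTop < b := by
    simpa [expNegLOne, iInf_lt_iff] using hIb
  obtain ⟨D, hDc, hxD, hDsub⟩ :=
    exists_compact_subset (hGo.inter (hh.isOpen_preimage _)) ⟨hxG, hxr⟩
  refine ⟨D, mem_interior_iff_mem_nhds.1 hxD, ?_⟩
  calc limsup (setExpPow μ t h D) atTop
      ≤ EReal.exp (ENNReal.log e) * limsup (fun a => μ a D ^ t a) atTop :=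
        limsup_setExpPow_le_of_le hpos (by simpa using hec.ne_top) fun y hy => (hDsub hy).2.le
    _ ≤ e * liminf (fun a => μ a G ^ t a) atTop := by
        rw [ENNReal.exp_log]
        exact mul_le_mul_right (hKG D G hDc hGo fun y hy => (hDsub hy).1) e
    _ ≤ e * b := mul_le_mul_right hGb.le e
    _ < c := ENNReal.mul_lt_of_lt_div hec

variable [IsDirected A (· ≤ ·)] [Nonempty A]

lemma exp_mul_expNegLOne_le_liminf [OpensMeasurableSpace X] (hpos : ∀ a, 0 < t a)
    (hh : LowerSemicontinuous h) (x : X) :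
    EReal.exp (h x) * expNegLOne μ t x ≤ liminf (expPow μ t h) atTop := by
  have hsup : EReal.exp (h x) = ⨆ r ∈ Iio (h x), EReal.exp r := by
    conv_lhs => rw [← sSup_Iio_eq_self_iff_isSuccPrelimit.2 (Order.IsSuccPrelimit.of_dense (h x))]
    exact EReal.expOrderIso.map_sSup _
  simp only [hsup, ENNReal.iSup_mul]
  refine iSup₂_le fun r hr => ?_
  have hG : IsOpen (h ⁻¹' Ioi r) := hh.isOpen_preimage r
  calc EReal.exp r * expNegLOne μ t x
      ≤ EReal.exp r * liminf (fun a => μ a (h ⁻¹' Ioi r) ^ t a) atTop :=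
        mul_le_mul_right (iInf₂_le_of_le _ hG (iInf_le _ hr)) _
    _ = liminf (fun a => EReal.exp r * μ a (h ⁻¹' Ioi r) ^ t a) atTop :=
        (ENNReal.liminf_const_mul_of_ne_top (by simpa using hr.ne_top)).symm
    _ ≤ liminf (expPow μ t h) atTop := by
        rw [← setExpPow_univ]
        exact liminf_le_liminf (.of_forall fun a =>
          (le_setExpPow_of_le (hpos a) hG.measurableSet fun y hy => le_of_lt hy).trans
            (setExpPow_mono (hpos a).le (subset_univ _)))

lemma limsup_setExpPow_le_biSup_of_isCompact [LocallyCompactSpace X] (hpos : ∀ a, 0 < t a)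
    (hto0 : Tendsto t atTop (𝓝 0))
    (hKG : ∀ K G : Set X, IsCompact K → IsOpen G → K ⊆ G →
      limsup (fun a => μ a K ^ t a) atTop ≤ liminf (fun a => μ a G ^ t a) atTop)
    (hh : UpperSemicontinuous h) {C : Set X} (hC : IsCompact C) (hC_bot : ∀ x ∈ C, h x ≠ ⊥)
    (hC_top : ∀ x ∈ C, h x ≠ ⊤) :
    limsup (setExpPow μ t h C) atTop ≤ ⨆ x ∈ C, EReal.exp (h x) * expNegLOne μ t x := by
  refine le_of_forall_gt_imp_ge_of_dense fun c hc => ?_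
  have hlocal : ∀ x ∈ C, ∃ D ∈ 𝓝 x, limsup (setExpPow μ t h D) atTop < c := fun x hx =>
    exists_mem_nhds_limsup_setExpPow_lt hpos hKG hh (hC_bot x hx) (hC_top x hx)
      ((le_iSup₂ (f := fun y (_ : y ∈ C) => EReal.exp (h y) * expNegLOne μ t y) x hx).trans_lt
        hc)
  choose! D hDx hDc using hlocal
  obtain ⟨s, hsC, hCs⟩ := hC.elim_nhds_subcover D hDx
  calc limsup (setExpPow μ t h C) atTop
      ≤ limsup (setExpPow μ t h (⋃ x ∈ s, D x)) atTop :=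
        limsup_le_limsup (.of_forall fun a => setExpPow_mono (hpos a).le hCs)
    _ ≤ s.sup fun x => limsup (setExpPow μ t h (D x)) atTop :=
        limsup_setExpPow_biUnion_le hpos hto0 s D
    _ ≤ c := Finset.sup_le fun x hx => (hDc x (hsC x hx)).le

lemma limsup_expPow_le [LocallyCompactSpace X] (hpos : ∀ a, 0 < t a)
    (hto0 : Tendsto t atTop (𝓝 0)) (hSub : ∀ a, μ a univ ≤ 1)
    (hKG : ∀ K G : Set X, IsCompact K → IsOpen G → K ⊆ G →
      limsup (fun a => μ a K ^ t a) atTop ≤ liminf (fun a => μ a G ^ t a) atTop)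
    (hh : Continuous h) {m M : ℝ} {K : Set X} (hK : IsCompact K)
    (htail : limsup (setExpPow μ t h {x | (M : EReal) < h x}) atTop ≤ EReal.exp m)
    (htight : EReal.exp M * limsup (fun a => μ a Kᶜ ^ t a) atTop ≤ EReal.exp m) :
    limsup (expPow μ t h) atTop ≤ max (EReal.exp m)
      (⨆ x ∈ K ∩ {x | (m : EReal) ≤ h x ∧ h x ≤ M},
        EReal.exp (h x) * expNegLOne μ t x) := by
  set C := K ∩ {x | (m : EReal) ≤ h x ∧ h x ≤ M}
  have hC : IsCompact C :=
    hK.inter_right ((isClosed_le continuous_const hh).inter (isClosed_le hh continuous_const))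
  have hcover :
      univ ⊆ {x | (M : EReal) < h x} ∪ {x | h x < m} ∪ (Kᶜ ∩ {x | h x ≤ M}) ∪ C := by
    intro x _
    by_cases hxM : (M : EReal) < h x
    · exact Or.inl (Or.inl (Or.inl hxM))
    by_cases hxm : h x < m
    · exact Or.inl (Or.inl (Or.inr hxm))
    by_cases hxK : x ∈ K
    · exact Or.inr ⟨hxK, not_lt.1 hxm, not_lt.1 hxM⟩
    · exact Or.inl (Or.inr ⟨hxK, not_lt.1 hxM⟩)
  have hlow : limsup (setExpPow μ t h {x | h x < m}) atTop ≤ EReal.exp m :=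
    calc limsup (setExpPow μ t h {x | h x < m}) atTop
        ≤ EReal.exp m * limsup (fun a => μ a {x | h x < m} ^ t a) atTop :=
          limsup_setExpPow_le_of_le hpos (EReal.coe_ne_top m) fun x hx => hx.le
      _ ≤ EReal.exp m * 1 := mul_le_mul_right (limsup_le_of_le (by isBoundedDefault)
          (.of_forall fun a => ENNReal.rpow_le_one ((measure_mono (subset_univ _)).trans (hSub a))
            (hpos a).le)) _
      _ = EReal.exp m := mul_one _
  have hout : limsup (setExpPow μ t h (Kᶜ ∩ {x | h x ≤ M})) atTop ≤ EReal.exp m :=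
    calc limsup (setExpPow μ t h (Kᶜ ∩ {x | h x ≤ M})) atTop
        ≤ EReal.exp M * limsup (fun a => μ a (Kᶜ ∩ {x | h x ≤ M}) ^ t a) atTop :=
          limsup_setExpPow_le_of_le hpos (EReal.coe_ne_top M) fun x hx => hx.2
      _ ≤ EReal.exp M * limsup (fun a => μ a Kᶜ ^ t a) atTop :=
          mul_le_mul_right (limsup_le_limsup (.of_forall fun a =>
            ENNReal.rpow_le_rpow (measure_mono inter_subset_left) (hpos a).le)) _
      _ ≤ EReal.exp m := htight
  have hmid := limsup_setExpPow_le_biSup_of_isCompact hpos hto0 hKG hh.upperSemicontinuous hC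
    (fun x hx => ne_bot_of_le_ne_bot (EReal.coe_ne_bot m) hx.2.1)
    (fun x hx => ne_top_of_le_ne_top (EReal.coe_ne_top M) hx.2.2)
  rw [← setExpPow_univ]
  refine (limsup_le_limsup (.of_forall fun a => setExpPow_mono (hpos a).le hcover)).trans ?_
  refine (limsup_setExpPow_union_le hpos hto0).trans (max_le_max ?_ hmid)
  refine (limsup_setExpPow_union_le hpos hto0).trans (max_le ?_ hout)
  exact (limsup_setExpPow_union_le hpos hto0).trans (max_le htail hlow)

lemma expPow_limits_eq_iSup [LocallyCompactSpace X] [OpensMeasurableSpace X]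
    (hpos : ∀ a, 0 < t a) (hto0 : Tendsto t atTop (𝓝 0)) (hSub : ∀ a, μ a univ ≤ 1)
    (hKG : ∀ K G : Set X, IsCompact K → IsOpen G → K ⊆ G →
      limsup (fun a => μ a K ^ t a) atTop ≤ liminf (fun a => μ a G ^ t a) atTop)
    (hh : Continuous h) {m M : ℝ} {K : Set X} (hK : IsCompact K)
    (htail : limsup (setExpPow μ t h {x | (M : EReal) < h x}) atTop ≤ EReal.exp m)
    (htight : EReal.exp M * limsup (fun a => μ a Kᶜ ^ t a) atTop ≤ EReal.exp m)
    (hm : EReal.exp m < limsup (expPow μ t h) atTop) :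
    liminf (expPow μ t h) atTop = limsup (expPow μ t h) atTop ∧
    limsup (expPow μ t h) atTop = ⨆ x ∈ K ∩ {x | (m : EReal) ≤ h x ∧ h x ≤ M},
      EReal.exp (h x) * expNegLOne μ t x ∧
    limsup (expPow μ t h) atTop = ⨆ x, EReal.exp (h x) * expNegLOne μ t x := by
  have hup := (le_max_iff.1 (limsup_expPow_le hpos hto0 hSub hKG hh hK htail htight))
    |>.resolve_left hm.not_ge
  have hCX := iSup₂_le fun x (_ : x ∈ K ∩ {x | (m : EReal) ≤ h x ∧ h x ≤ M}) =>
    le_iSup (fun y => EReal.exp (h y) * expNegLOne μ t y) x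
  have hlow := iSup_le fun x =>
    exp_mul_expNegLOne_le_liminf (μ := μ) hpos hh.lowerSemicontinuous x
  have hle : liminf (expPow μ t h) atTop ≤ limsup (expPow μ t h) atTop := liminf_le_limsup
  exact ⟨hle.antisymm (hup.trans (hCX.trans hlow)), hup.antisymm ((hCX.trans hlow).trans hle),
    (hup.trans hCX).antisymm (hlow.trans hle)⟩

end LargeDeviations

theorem statement1_general
    {X : Type*} [TopologicalSpace X] [LocallyCompactSpace X]
    [MeasurableSpace X] [BorelSpace X]
    {A : Type*} [Preorder A] [IsDirected A (· ≤ ·)] [Nonempty A]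
    (μ : A → Measure X) (t : A → ℝ)
    (hSub : ∀ a, μ a Set.univ ≤ 1)
    (hpos : ∀ a, 0 < t a) (hto0 : Tendsto t atTop (𝓝 (0 : ℝ)))
    (T : Set (X → EReal))
    (hTcont : ∀ h ∈ T, Continuous h)
    -- (i) the tail condition
    (hTail : TailCondition μ t T)
    -- (ii) comparison of compact and open asymptotic measures
    (hKG : ∀ K G : Set X, IsCompact K → IsOpen G → K ⊆ G →
      Filter.limsup (fun a => μ a K ^ (t a)) Filter.atTop ≤
        Filter.liminf (fun a => μ a G ^ (t a)) Filter.atTop)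
    -- (iii) uniform lower bound on Λ̄
    (m : ℝ) (hm : ∀ h ∈ T, (m : EReal) < LambdaBar μ t h)
    -- exponential tightness
    (hET : ExpTight μ t) :
    (∀ h ∈ T, LambdaExists μ t h) ∧
    ∃ M : ℝ, ∃ K : Set X, IsCompact K ∧ ∀ h ∈ T,
      LambdaBar μ t h =
        (⨆ x ∈ K ∩ {x : X | (m : EReal) ≤ h x ∧ h x ≤ (M : EReal)}, (h x - lOne μ t x)) ∧
      LambdaBar μ t h = ⨆ x : X, (h x - lOne μ t x) := by
  obtain ⟨M, hM⟩ := hTail _ (Real.exp_pos m)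
  obtain ⟨K, hK, hKc⟩ := hET _ (Real.exp_pos (m - M))
  have htight : EReal.exp M * limsup (fun a => μ a Kᶜ ^ t a) atTop ≤ EReal.exp m := by
    calc EReal.exp M * limsup (fun a => μ a Kᶜ ^ t a) atTop
        ≤ ENNReal.ofReal (Real.exp M) * ENNReal.ofReal (Real.exp (m - M)) :=
          mul_le_mul_right hKc.le _
      _ = EReal.exp m := by
          rw [← ENNReal.ofReal_mul (Real.exp_pos M).le, ← Real.exp_add, add_sub_cancel]; rfl
  have key := fun h (hT : h ∈ T) => expPow_limits_eq_iSup hpos hto0 hSub hKG (hTcont h hT) hK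
    (hM h hT).le htight (by simpa [LambdaBar] using EReal.exp_strictMono (hm h hT))
  refine ⟨fun h hT => congrArg ENNReal.log (key h hT).1, M, K, hK, fun h hT => ?_⟩
  simp only [← log_exp_mul_expNegLOne]
  exact ⟨by rw [LambdaBar, (key h hT).2.1]; exact map_iSup₂ ENNReal.logOrderIso _,
    by rw [LambdaBar, (key h hT).2.2]; exact map_iSup ENNReal.logOrderIso _⟩

/-- Theorem (compact case), part (b). -/
theorem statement1
    {X : Type*} [TopologicalSpace X] [T2Space X] [LocallyCompactSpace X]
    [MeasurableSpace X] [BorelSpace X]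
    {A : Type*} [Preorder A] [IsDirected A (· ≤ ·)] [Nonempty A]
    (μ : A → Measure X) (t : A → ℝ)
    (hRadon : ∀ a, (μ a).InnerRegular) (hSub : ∀ a, μ a Set.univ ≤ 1)
    (hpos : ∀ a, 0 < t a) (hto0 : Tendsto t atTop (𝓝 (0 : ℝ)))
    (T : Set (X → EReal))
    (hTcont : ∀ h ∈ T, Continuous h) (hTtop : ∀ h ∈ T, ∀ x, h x ≠ ⊤)
    -- (i) the tail condition
    (hTail : TailCondition μ t T)
    -- (ii) comparison of compact and open asymptotic measures
    (hKG : ∀ K G : Set X, IsCompact K → IsOpen G → K ⊆ G →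
      Filter.limsup (fun a => μ a K ^ (t a)) Filter.atTop ≤
        Filter.liminf (fun a => μ a G ^ (t a)) Filter.atTop)
    -- (iii) uniform lower bound on Λ̄
    (m : ℝ) (hm : ∀ h ∈ T, (m : EReal) < LambdaBar μ t h)
    -- exponential tightness
    (hET : ExpTight μ t) :
    (∀ h ∈ T, LambdaExists μ t h) ∧
    ∃ M : ℝ, ∃ K : Set X, IsCompact K ∧ ∀ h ∈ T,
      LambdaBar μ t h =
        (⨆ x ∈ K ∩ {x : X | (m : EReal) ≤ h x ∧ h x ≤ (M : EReal)}, (h x - lOne μ t x)) ∧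
      LambdaBar μ t h = ⨆ x : X, (h x - lOne μ t x) :=
  statement1_general μ t hSub hpos hto0 T hTcont hTail hKG m hm hET

end
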